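/- arXiv:0704.1678 — 2 statements merged into one kernel-verified Lean document; each statement's English description precedes it below -/
import Mathlib

section
/- Padding approximate equilibria: let (A',B') be an n×n bimatrix game with entries in [0,2] such that every column of A' and every row of B' contains an entry ≥ 1. Build the n''×n'' game (A'',B''), n'' > n, as block matrices: A''_{1,1} = A', B''_{1,1} = B', A''_{1,2} = B''_{2,1} = all-ones, and A''_{2,1} = A''_{2,2} = B''_{1,2} = B''_{2,2} = all-zeros. If (x'',y'') is an ε-approximate Nash equilibrium of (A'',B'') with ε < 1/2 such that a = Σ_{i≤n} x''_i > 1/2 and b = Σ_{i≤n} y''_i > 1/2, then (x',y') defined by x'_i = x''_i/a, y'_i = y''_i/b for i ≤ n is a 2ε-approximate Nash equilibrium of (A',B'). -/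
open Classical

/-- The expected payoff `xᵀ A y`. -/
def pay {N : ℕ} (A : Matrix (Fin N) (Fin N) ℝ) (x y : Fin N → ℝ) : ℝ :=
  ∑ i, ∑ j, x i * A i j * y j

/-- `x` is a probability vector (a mixed strategy). -/
def isProb {N : ℕ} (x : Fin N → ℝ) : Prop := (∀ i, 0 ≤ x i) ∧ ∑ i, x i = 1

/-- `(x,y)` is an ε-approximate Nash equilibrium of `(A,B)`. -/
def isApproxNash {N : ℕ} (A B : Matrix (Fin N) (Fin N) ℝ) (ε : ℝ) (x y : Fin N → ℝ) : Prop :=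
  isProb x ∧ isProb y ∧
  (∀ x' : Fin N → ℝ, isProb x' → pay A x y ≥ pay A x' y - ε) ∧
  (∀ y' : Fin N → ℝ, isProb y' → pay B x y ≥ pay B x y' - ε)

lemma sum_castLE {n n'' : ℕ} (h : n ≤ n'') (f : Fin n'' → ℝ) :
    ∑ i ∈ Finset.univ.filter (fun i : Fin n'' => (i : ℕ) < n), f i
      = ∑ i : Fin n, f (Fin.castLE h i) := by
  have h2 : ∑ i : Fin n, f (Fin.castLE h i)
      = ∑ i ∈ Finset.univ.map (Fin.castLEEmb h), f i := by
    rw [Finset.sum_map]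
    simp [Fin.castLEEmb_apply]
  rw [h2]
  congr 1
  ext i
  simp only [Finset.mem_filter, Finset.mem_univ, true_and, Finset.mem_map,
    Fin.castLEEmb_apply]
  constructor
  · intro hi
    exact ⟨⟨i, hi⟩, rfl⟩
  · rintro ⟨a, rfl⟩
    exact a.isLt

lemma pay_div_left {N : ℕ} (M : Matrix (Fin N) (Fin N) ℝ) (x y : Fin N → ℝ) (a : ℝ)
    (ha : a ≠ 0) : pay M x y = a * pay M (fun i => x i / a) y := by
  unfold pay
  rw [Finset.mul_sum]
  refine Finset.sum_congr rfl fun i _ => ?_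
  rw [Finset.mul_sum]
  refine Finset.sum_congr rfl fun j _ => ?_
  field_simp

lemma pay_div_right {N : ℕ} (M : Matrix (Fin N) (Fin N) ℝ) (x y : Fin N → ℝ) (a : ℝ)
    (ha : a ≠ 0) : pay M x y = a * pay M x (fun j => y j / a) := by
  unfold pay
  rw [Finset.mul_sum]
  refine Finset.sum_congr rfl fun i _ => ?_
  rw [Finset.mul_sum]
  refine Finset.sum_congr rfl fun j _ => ?_
  field_simp

lemma pay_nonneg {N : ℕ} {M : Matrix (Fin N) (Fin N) ℝ} {x y : Fin N → ℝ}
    (hM : ∀ i j, 0 ≤ M i j) (hx : ∀ i, 0 ≤ x i) (hy : ∀ j, 0 ≤ y j) : 0 ≤ pay M x y := by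
  unfold pay
  refine Finset.sum_nonneg fun i _ => Finset.sum_nonneg fun j _ => ?_
  exact mul_nonneg (mul_nonneg (hx i) (hM i j)) (hy j)

lemma pay_padA {n n'' : ℕ} (h : n ≤ n'') (A' : Matrix (Fin n) (Fin n) ℝ)
    (A'' : Matrix (Fin n'') (Fin n'') ℝ)
    (hA'' : ∀ i j : Fin n'', A'' i j =
      if hi : (i : ℕ) < n then
        (if hj : (j : ℕ) < n then A' ⟨i, hi⟩ ⟨j, hj⟩ else 1)
      else 0)
    (x y : Fin n'' → ℝ) :
    pay A'' x y
      = pay A' (fun i => x (Fin.castLE h i)) (fun j => y (Fin.castLE h j))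
        + (∑ i ∈ Finset.univ.filter (fun i : Fin n'' => (i : ℕ) < n), x i)
          * (∑ j ∈ Finset.univ.filter (fun j : Fin n'' => ¬ (j : ℕ) < n), y j) := by
  have split : ∀ f : Fin n'' → ℝ, ∑ i, f i
      = ∑ i ∈ Finset.univ.filter (fun i : Fin n'' => (i : ℕ) < n), f i
        + ∑ i ∈ Finset.univ.filter (fun i : Fin n'' => ¬ (i : ℕ) < n), f i := by
    intro f
    exact (Finset.sum_filter_add_sum_filter_not _ _ f).symm
  show ∑ i, ∑ j, x i * A'' i j * y j = _
  rw [split (fun i => ∑ j, x i * A'' i j * y j)]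
  have h0 : ∑ i ∈ Finset.univ.filter (fun i : Fin n'' => ¬ (i : ℕ) < n),
      ∑ j, x i * A'' i j * y j = 0 := by
    refine Finset.sum_eq_zero fun i hi => Finset.sum_eq_zero fun j _ => ?_
    have hi' : ¬ (i : ℕ) < n := by simpa using hi
    rw [hA'', dif_neg hi']
    ring
  rw [h0, add_zero]
  have h1 : ∀ i ∈ Finset.univ.filter (fun i : Fin n'' => (i : ℕ) < n),
      (∑ j, x i * A'' i j * y j)
        = (∑ j ∈ Finset.univ.filter (fun j : Fin n'' => (j : ℕ) < n), x i * A'' i j * y j)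
          + x i * (∑ j ∈ Finset.univ.filter (fun j : Fin n'' => ¬ (j : ℕ) < n), y j) := by
    intro i hi
    have hi' : (i : ℕ) < n := by simpa using hi
    rw [split (fun j => x i * A'' i j * y j)]
    congr 1
    rw [Finset.mul_sum]
    refine Finset.sum_congr rfl fun j hj => ?_
    have hj' : ¬ (j : ℕ) < n := by simpa using hj
    rw [hA'', dif_pos hi', dif_neg hj']
    ring
  rw [Finset.sum_congr rfl h1, Finset.sum_add_distrib, ← Finset.sum_mul]
  congr 1
  rw [sum_castLE h]
  show _ = ∑ i : Fin n, ∑ j : Fin n, _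
  refine Finset.sum_congr rfl fun i _ => ?_
  rw [sum_castLE h]
  refine Finset.sum_congr rfl fun j _ => ?_
  rw [hA'']
  simp only [Fin.coe_castLE]
  rw [dif_pos i.isLt, dif_pos j.isLt]

lemma pay_padB {n n'' : ℕ} (h : n ≤ n'') (B' : Matrix (Fin n) (Fin n) ℝ)
    (B'' : Matrix (Fin n'') (Fin n'') ℝ)
    (hB'' : ∀ i j : Fin n'', B'' i j =
      if hj : (j : ℕ) < n then
        (if hi : (i : ℕ) < n then B' ⟨i, hi⟩ ⟨j, hj⟩ else 1)
      else 0)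
    (x y : Fin n'' → ℝ) :
    pay B'' x y
      = pay B' (fun i => x (Fin.castLE h i)) (fun j => y (Fin.castLE h j))
        + (∑ i ∈ Finset.univ.filter (fun i : Fin n'' => ¬ (i : ℕ) < n), x i)
          * (∑ j ∈ Finset.univ.filter (fun j : Fin n'' => (j : ℕ) < n), y j) := by
  have split : ∀ f : Fin n'' → ℝ, ∑ i, f i
      = ∑ i ∈ Finset.univ.filter (fun i : Fin n'' => (i : ℕ) < n), f i
        + ∑ i ∈ Finset.univ.filter (fun i : Fin n'' => ¬ (i : ℕ) < n), f i := by
    intro f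
    exact (Finset.sum_filter_add_sum_filter_not _ _ f).symm
  show ∑ i, ∑ j, x i * B'' i j * y j = _
  rw [split (fun i => ∑ j, x i * B'' i j * y j)]
  have h0 : ∑ i ∈ Finset.univ.filter (fun i : Fin n'' => ¬ (i : ℕ) < n),
      ∑ j, x i * B'' i j * y j
      = (∑ i ∈ Finset.univ.filter (fun i : Fin n'' => ¬ (i : ℕ) < n), x i)
          * (∑ j ∈ Finset.univ.filter (fun j : Fin n'' => (j : ℕ) < n), y j) := by
    rw [Finset.sum_mul]
    refine Finset.sum_congr rfl fun i hi => ?_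
    have hi' : ¬ (i : ℕ) < n := by simpa using hi
    rw [split (fun j => x i * B'' i j * y j)]
    have hz : ∑ j ∈ Finset.univ.filter (fun j : Fin n'' => ¬ (j : ℕ) < n),
        x i * B'' i j * y j = 0 := by
      refine Finset.sum_eq_zero fun j hj => ?_
      have hj' : ¬ (j : ℕ) < n := by simpa using hj
      rw [hB'', dif_neg hj']
      ring
    rw [hz, add_zero, Finset.mul_sum]
    refine Finset.sum_congr rfl fun j hj => ?_
    have hj' : (j : ℕ) < n := by simpa using hj
    rw [hB'', dif_pos hj', dif_neg hi']
    ring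
  rw [h0]
  congr 1
  have h1 : ∀ i ∈ Finset.univ.filter (fun i : Fin n'' => (i : ℕ) < n),
      (∑ j, x i * B'' i j * y j)
        = ∑ j ∈ Finset.univ.filter (fun j : Fin n'' => (j : ℕ) < n), x i * B'' i j * y j := by
    intro i hi
    rw [split (fun j => x i * B'' i j * y j)]
    have hz : ∑ j ∈ Finset.univ.filter (fun j : Fin n'' => ¬ (j : ℕ) < n),
        x i * B'' i j * y j = 0 := by
      refine Finset.sum_eq_zero fun j hj => ?_
      have hj' : ¬ (j : ℕ) < n := by simpa using hj
      rw [hB'', dif_neg hj']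
      ring
    rw [hz, add_zero]
  rw [Finset.sum_congr rfl h1, sum_castLE h]
  show _ = ∑ i : Fin n, ∑ j : Fin n, _
  refine Finset.sum_congr rfl fun i _ => ?_
  rw [sum_castLE h]
  refine Finset.sum_congr rfl fun j _ => ?_
  rw [hB'']
  simp only [Fin.coe_castLE]
  rw [dif_pos j.isLt, dif_pos i.isLt]

/-- Padding a game into a larger one: restricting an ε-approximate equilibrium of the
padded game that puts more than half its mass on the original strategies, and
renormalizing, gives a 2ε-approximate equilibrium of the original game. -/
theorem padded_game_approx (n n'' : ℕ) (hnn : n < n'')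
    (A' B' : Matrix (Fin n) (Fin n) ℝ)
    (hA' : ∀ i j, A' i j ∈ Set.Icc (0 : ℝ) 2) (hB' : ∀ i j, B' i j ∈ Set.Icc (0 : ℝ) 2)
    (hcol : ∀ j, ∃ i, 1 ≤ A' i j) (hrow : ∀ i, ∃ j, 1 ≤ B' i j)
    (A'' B'' : Matrix (Fin n'') (Fin n'') ℝ)
    (hA'' : ∀ i j : Fin n'', A'' i j =
      if hi : (i : ℕ) < n then
        (if hj : (j : ℕ) < n then A' ⟨i, hi⟩ ⟨j, hj⟩ else 1)
      else 0)
    (hB'' : ∀ i j : Fin n'', B'' i j =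
      if hj : (j : ℕ) < n then
        (if hi : (i : ℕ) < n then B' ⟨i, hi⟩ ⟨j, hj⟩ else 1)
      else 0)
    (ε : ℝ) (hε : ε < 1 / 2)
    (x'' y'' : Fin n'' → ℝ) (happrox : isApproxNash A'' B'' ε x'' y'')
    (ha : 1 / 2 < ∑ i ∈ Finset.univ.filter (fun i : Fin n'' => (i : ℕ) < n), x'' i)
    (hb : 1 / 2 < ∑ i ∈ Finset.univ.filter (fun i : Fin n'' => (i : ℕ) < n), y'' i) :
    isApproxNash A' B'
      (2 * ε)
      (fun i => x'' (Fin.castLE hnn.le i) /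
        ∑ l ∈ Finset.univ.filter (fun l : Fin n'' => (l : ℕ) < n), x'' l)
      (fun j => y'' (Fin.castLE hnn.le j) /
        ∑ l ∈ Finset.univ.filter (fun l : Fin n'' => (l : ℕ) < n), y'' l) := by
  obtain ⟨hx'', hy'', hAeq, hBeq⟩ := happrox
  have hle : n ≤ n'' := hnn.le
  set a := ∑ i ∈ Finset.univ.filter (fun i : Fin n'' => (i : ℕ) < n), x'' i with ha_def
  set b := ∑ i ∈ Finset.univ.filter (fun i : Fin n'' => (i : ℕ) < n), y'' i with hb_def
  have hεnn : 0 ≤ ε := by have := hAeq x'' hx''; linarith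
  have ha1 : a ≤ 1 := by
    rw [ha_def, ← hx''.2]
    exact Finset.sum_le_sum_of_subset_of_nonneg (Finset.filter_subset _ _)
      (fun i _ _ => hx''.1 i)
  have hb1 : b ≤ 1 := by
    rw [hb_def, ← hy''.2]
    exact Finset.sum_le_sum_of_subset_of_nonneg (Finset.filter_subset _ _)
      (fun i _ _ => hy''.1 i)
  have ha0 : (0:ℝ) < a := by linarith
  have hb0 : (0:ℝ) < b := by linarith
  have hane : a ≠ 0 := ne_of_gt ha0
  have hbne : b ≠ 0 := ne_of_gt hb0
  have hxc : ∑ i ∈ Finset.univ.filter (fun i : Fin n'' => ¬ (i : ℕ) < n), x'' i = 1 - a := by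
    have h := Finset.sum_filter_add_sum_filter_not Finset.univ
      (fun i : Fin n'' => (i : ℕ) < n) x''
    rw [hx''.2] at h
    linarith
  have hyc : ∑ i ∈ Finset.univ.filter (fun i : Fin n'' => ¬ (i : ℕ) < n), y'' i = 1 - b := by
    have h := Finset.sum_filter_add_sum_filter_not Finset.univ
      (fun i : Fin n'' => (i : ℕ) < n) y''
    rw [hy''.2] at h
    linarith
  set x' : Fin n → ℝ := fun i => x'' (Fin.castLE hnn.le i) / a with hx'_def
  set y' : Fin n → ℝ := fun j => y'' (Fin.castLE hnn.le j) / b with hy'_def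
  have hsumxc : a = ∑ i : Fin n, x'' (Fin.castLE hle i) := by
    rw [ha_def]; exact sum_castLE hle x''
  have hsumyc : b = ∑ i : Fin n, y'' (Fin.castLE hle i) := by
    rw [hb_def]; exact sum_castLE hle y''
  have hx'prob : isProb x' := by
    constructor
    · intro i; exact div_nonneg (hx''.1 _) ha0.le
    · show ∑ i : Fin n, x'' (Fin.castLE hnn.le i) / a = 1
      rw [← Finset.sum_div, ← hsumxc, div_self hane]
  have hy'prob : isProb y' := by
    constructor
    · intro i; exact div_nonneg (hy''.1 _) hb0.le
    · show ∑ i : Fin n, y'' (Fin.castLE hnn.le i) / b = 1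
      rw [← Finset.sum_div, ← hsumyc, div_self hbne]
  have hPnn : 0 ≤ pay A' x' y' := pay_nonneg (fun i j => (hA' i j).1) hx'prob.1 hy'prob.1
  have hQnn : 0 ≤ pay B' x' y' := pay_nonneg (fun i j => (hB' i j).1) hx'prob.1 hy'prob.1
  have e1A : pay A' (fun i => x'' (Fin.castLE hle i)) (fun j => y'' (Fin.castLE hle j))
      = a * (b * pay A' x' y') := by
    rw [pay_div_left _ _ _ a hane]
    congr 1
    rw [pay_div_right _ _ _ b hbne]
  refine ⟨hx'prob, hy'prob, ?_, ?_⟩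
  · intro xt hxt
    set X : Fin n'' → ℝ := fun i => if h : (i : ℕ) < n then xt ⟨i, h⟩ else 0 with hX_def
    have hXc : ∀ i : Fin n, X (Fin.castLE hle i) = xt i := by
      intro i
      show (if h : ((Fin.castLE hle i : Fin n'') : ℕ) < n then xt ⟨_, h⟩ else 0) = xt i
      simp only [Fin.coe_castLE]
      rw [dif_pos i.isLt]
    have hXS : ∑ i ∈ Finset.univ.filter (fun i : Fin n'' => (i : ℕ) < n), X i = 1 := by
      rw [sum_castLE hle]
      simp only [hXc]
      exact hxt.2
    have hXSc : ∑ i ∈ Finset.univ.filter (fun i : Fin n'' => ¬ (i : ℕ) < n), X i = 0 :=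
      Finset.sum_eq_zero fun i hi => dif_neg (by simpa using hi)
    have hXprob : isProb X := by
      constructor
      · intro i
        show (0:ℝ) ≤ if h : (i : ℕ) < n then xt ⟨i, h⟩ else 0
        split
        · exact hxt.1 _
        · exact le_refl 0
      · rw [← Finset.sum_filter_add_sum_filter_not Finset.univ
          (fun i : Fin n'' => (i : ℕ) < n) X, hXS, hXSc, add_zero]
    have key := hAeq X hXprob
    rw [pay_padA hle A' A'' hA'' x'' y'', pay_padA hle A' A'' hA'' X y''] at key
    rw [e1A] at key
    have e2 : pay A' (fun i => X (Fin.castLE hle i)) (fun j => y'' (Fin.castLE hle j))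
        = b * pay A' xt y' := by
      have hfe : (fun i => X (Fin.castLE hle i)) = xt := funext hXc
      rw [hfe, pay_div_right _ _ _ b hbne]
    rw [e2, hyc, hXS] at key
    show pay A' x' y' ≥ pay A' xt y' - 2 * ε
    nlinarith [mul_nonneg (mul_nonneg hb0.le hPnn) (sub_nonneg.2 ha1),
      mul_nonneg hεnn (by linarith : (0:ℝ) ≤ 2 * b - 1),
      mul_nonneg (sub_nonneg.2 ha1) (sub_nonneg.2 hb1)]
  · intro yt hyt
    set Y : Fin n'' → ℝ := fun j => if h : (j : ℕ) < n then yt ⟨j, h⟩ else 0 with hY_def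
    have hYc : ∀ j : Fin n, Y (Fin.castLE hle j) = yt j := by
      intro j
      show (if h : ((Fin.castLE hle j : Fin n'') : ℕ) < n then yt ⟨_, h⟩ else 0) = yt j
      simp only [Fin.coe_castLE]
      rw [dif_pos j.isLt]
    have hYS : ∑ j ∈ Finset.univ.filter (fun j : Fin n'' => (j : ℕ) < n), Y j = 1 := by
      rw [sum_castLE hle]
      simp only [hYc]
      exact hyt.2
    have hYSc : ∑ j ∈ Finset.univ.filter (fun j : Fin n'' => ¬ (j : ℕ) < n), Y j = 0 :=
      Finset.sum_eq_zero fun j hj => dif_neg (by simpa using hj)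
    have hYprob : isProb Y := by
      constructor
      · intro j
        show (0:ℝ) ≤ if h : (j : ℕ) < n then yt ⟨j, h⟩ else 0
        split
        · exact hyt.1 _
        · exact le_refl 0
      · rw [← Finset.sum_filter_add_sum_filter_not Finset.univ
          (fun j : Fin n'' => (j : ℕ) < n) Y, hYS, hYSc, add_zero]
    have key := hBeq Y hYprob
    rw [pay_padB hle B' B'' hB'' x'' y'', pay_padB hle B' B'' hB'' x'' Y] at key
    have e1B : pay B' (fun i => x'' (Fin.castLE hle i)) (fun j => y'' (Fin.castLE hle j))
        = a * (b * pay B' x' y') := by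
      rw [pay_div_left _ _ _ a hane]
      congr 1
      rw [pay_div_right _ _ _ b hbne]
    have e2 : pay B' (fun i => x'' (Fin.castLE hle i)) (fun j => Y (Fin.castLE hle j))
        = a * pay B' x' yt := by
      have hfe : (fun j => Y (Fin.castLE hle j)) = yt := funext hYc
      rw [hfe, pay_div_left _ _ _ a hane]
    rw [e1B, e2, hxc, hYS] at key
    show pay B' x' y' ≥ pay B' x' yt - 2 * ε
    nlinarith [mul_nonneg (mul_nonneg ha0.le hQnn) (sub_nonneg.2 hb1),
      mul_nonneg hεnn (by linarith : (0:ℝ) ≤ 2 * a - 1),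
      mul_nonneg (sub_nonneg.2 ha1) (sub_nonneg.2 hb1)]
end

section
/- The Generalized Matching Pennies prototype has uniform capacities: let K ≥ 1, N = 2K, M > 0, let A* be the N×N block-diagonal matrix with K diagonal 2×2 blocks of all M's, and B* = -A*. Then in every Nash equilibrium (x,y) of (A*,B*), for every k ∈ {1,...,K}: x_{2k-1} + x_{2k} = 1/K and y_{2k-1} + y_{2k} = 1/K. -/
/-!
Against a pure strategy in block `k`, the opponent's payoff is `M` times the mass that the
equilibrium strategy puts on block `k`. Hence the equilibrium payoff `v` satisfies
`M * (mass of y on block k) ≤ v ≤ M * (mass of x on block k)` for every `k`. Both families of block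
masses sum to `1`, so all these inequalities are equalities and every block mass is the same
constant, necessarily `1 / K`.
-/

open Matrix

section Payoff

variable {N : ℕ} (A : Matrix (Fin N) (Fin N) ℝ)

theorem isProb_single (i : Fin N) : isProb (Pi.single i (1 : ℝ)) :=
  ⟨fun j => by by_cases h : j = i <;> simp [h], by simp⟩

theorem pay_eq_dotProduct_mulVec (x y : Fin N → ℝ) : pay A x y = x ⬝ᵥ (A *ᵥ y) := by
  simp only [pay, dotProduct, mulVec, Finset.mul_sum, mul_assoc]

theorem pay_neg (x y : Fin N → ℝ) : pay (-A) x y = -pay A x y := by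
  simp [pay_eq_dotProduct_mulVec, neg_mulVec]

theorem pay_single_left (i : Fin N) (y : Fin N → ℝ) :
    pay A (Pi.single i 1) y = (A *ᵥ y) i := by
  rw [pay_eq_dotProduct_mulVec, single_one_dotProduct]

theorem pay_single_right (x : Fin N → ℝ) (j : Fin N) :
    pay A x (Pi.single j 1) = (x ᵥ* A) j := by
  rw [pay_eq_dotProduct_mulVec, dotProduct_mulVec, dotProduct_single_one]

variable {A} {x y : Fin N → ℝ}

theorem mulVec_le_pay_of_bestResponse
    (h : ∀ x', isProb x' → pay A x y ≥ pay A x' y) (i : Fin N) : (A *ᵥ y) i ≤ pay A x y := by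
  simpa only [pay_single_left] using h _ (isProb_single i)

theorem pay_le_vecMul_of_bestResponse_neg
    (h : ∀ y', isProb y' → pay (-A) x y ≥ pay (-A) x y') (j : Fin N) : pay A x y ≤ (x ᵥ* A) j := by
  have hj := h _ (isProb_single j)
  rwa [pay_neg, pay_neg, pay_single_right, ge_iff_le, neg_le_neg_iff] at hj

end Payoff

section Pairs

variable {K : ℕ}

def pairSum (x : Fin (2 * K) → ℝ) (k : Fin K) : ℝ :=
  x ⟨2 * (k : ℕ), by omega⟩ + x ⟨2 * (k : ℕ) + 1, by omega⟩

def finProdFinTwoEquiv : Fin K × Fin 2 ≃ Fin (2 * K) :=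
  finProdFinEquiv.trans (finCongr (Nat.mul_comm K 2))

theorem finProdFinTwoEquiv_apply_val (p : Fin K × Fin 2) :
    (finProdFinTwoEquiv p : ℕ) = 2 * p.1 + p.2 := by
  simp only [finProdFinTwoEquiv, Equiv.trans_apply, finCongr_apply, Fin.val_cast,
    finProdFinEquiv_apply_val]
  ring

theorem sum_eq_sum_pairSum (x : Fin (2 * K) → ℝ) : ∑ i, x i = ∑ k, pairSum x k := by
  rw [← finProdFinTwoEquiv.sum_comp, Fintype.sum_prod_type]
  refine Finset.sum_congr rfl fun k _ => ?_
  rw [Fin.sum_univ_two, pairSum]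
  congr 2 <;> ext <;> simp [finProdFinTwoEquiv_apply_val]

theorem mulVec_pair_of_blockDiag {M : ℝ} {A : Matrix (Fin (2 * K)) (Fin (2 * K)) ℝ}
    (hA : ∀ i j : Fin (2 * K), A i j = if (i : ℕ) / 2 = (j : ℕ) / 2 then M else 0)
    (y : Fin (2 * K) → ℝ) (k : Fin K) :
    (A *ᵥ y) ⟨2 * (k : ℕ), by omega⟩ = M * pairSum y k := by
  rw [mulVec, dotProduct, sum_eq_sum_pairSum, Finset.sum_eq_single k]
  · simp only [pairSum, hA]
    rw [if_pos trivial, if_pos (by omega), mul_add]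
  · intro l _ hlk
    have hlk_val : (l : ℕ) ≠ k := Fin.val_ne_of_ne hlk
    simp only [pairSum, hA]
    rw [if_neg (by omega), if_neg (by omega), zero_mul, zero_mul, add_zero]
  · simp

end Pairs

theorem eq_one_div_card_of_le_of_le {ι : Type*} [Fintype ι] {f g : ι → ℝ} {c : ℝ}
    (hg : ∀ i, g i ≤ c) (hf : ∀ i, c ≤ f i) (hf1 : ∑ i, f i = 1) (hg1 : ∑ i, g i = 1) (i : ι) :
    f i = 1 / Fintype.card ι ∧ g i = 1 / Fintype.card ι := by
  have hgf : ∀ i, g i = f i :=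
    fun i => (Finset.sum_eq_sum_iff_of_le fun i _ => (hg i).trans (hf i)).1
      (hg1.trans hf1.symm) i (Finset.mem_univ i)
  have hfc : ∀ i, f i = c := fun i => le_antisymm (hgf i ▸ hg i) (hf i)
  have hc : Fintype.card ι * c = 1 := by simpa [hfc] using hf1
  rw [hgf, hfc, eq_one_div_of_mul_eq_one_right hc]
  exact ⟨rfl, rfl⟩

/-- In every Nash equilibrium of the Generalized Matching Pennies prototype `(A*, -A*)`
with `K` diagonal 2×2 blocks of `M > 0`, each pair of consecutive probabilities sums to
exactly `1/K`, for both players. -/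
theorem matching_pennies_uniform_capacities (K : ℕ) (M : ℝ) (hM : 0 < M)
    (Astar : Matrix (Fin (2 * K)) (Fin (2 * K)) ℝ)
    (hAstar : ∀ i j : Fin (2 * K),
      Astar i j = if (i : ℕ) / 2 = (j : ℕ) / 2 then M else 0)
    (x y : Fin (2 * K) → ℝ) (hx : isProb x) (hy : isProb y)
    (hNash₁ : ∀ x' : Fin (2 * K) → ℝ, isProb x' → pay Astar x y ≥ pay Astar x' y)
    (hNash₂ : ∀ y' : Fin (2 * K) → ℝ, isProb y' → pay (-Astar) x y ≥ pay (-Astar) x y') :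
    ∀ k : Fin K,
      x ⟨2 * (k : ℕ), by have := k.isLt; omega⟩ +
          x ⟨2 * (k : ℕ) + 1, by have := k.isLt; omega⟩ = 1 / (K : ℝ) ∧
      y ⟨2 * (k : ℕ), by have := k.isLt; omega⟩ +
          y ⟨2 * (k : ℕ) + 1, by have := k.isLt; omega⟩ = 1 / (K : ℝ) := by
  have hsymm : Astarᵀ = Astar := by
    ext i j
    simp only [transpose_apply, hAstar, eq_comm]
  have hrow (k : Fin K) : pairSum y k ≤ pay Astar x y / M := by
    rw [le_div_iff₀' hM, ← mulVec_pair_of_blockDiag hAstar]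
    exact mulVec_le_pay_of_bestResponse hNash₁ _
  have hcol (k : Fin K) : pay Astar x y / M ≤ pairSum x k := by
    rw [div_le_iff₀' hM, ← mulVec_pair_of_blockDiag hAstar, ← vecMul_transpose, hsymm]
    exact pay_le_vecMul_of_bestResponse_neg hNash₂ _
  intro k
  simpa [pairSum] using eq_one_div_card_of_le_of_le hrow hcol
    (by rw [← sum_eq_sum_pairSum, hx.2]) (by rw [← sum_eq_sum_pairSum, hy.2]) k
end
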